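/- arXiv:1804.06539 — 2 statements merged into one kernel-verified Lean document; each statement's English description precedes it below -/
import Mathlib

section
/- (Global weak convergence of the successive convexification iteration.) Assume g₀ and all g_i are continuously differentiable on ℝ^n. Let Z ⊆ ℝ^n be a nonempty compact set, let r_l > 0 and ρ₀ ∈ (0, 1), and let {z^k} be a sequence in Z such that for every k there exist r^k ≥ r_l and d^k minimizing L_{z^k} over the closed ball {d : ‖d‖ ≤ r^k} with z^{k+1} = z^k + d^k and J(z^k) − J(z^{k+1}) ≥ ρ₀ · (J(z^k) − L_{z^k}(d^k)). Then {z^k} has at least one convergent subsequence, and every limit point z̄ of {z^k} is stationary for the linearized problem in the sense that L_{z̄}(d) ≥ J(z̄) for all d ∈ ℝ^n. -/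
open RealInnerProductSpace Metric Filter Topology Asymptotics

noncomputable def Jpen {n : ℕ} {ι : Type*} (E I : Finset ι)
    (g₀ : EuclideanSpace ℝ (Fin n) → ℝ) (g : ι → EuclideanSpace ℝ (Fin n) → ℝ)
    (lam : ι → ℝ) (z : EuclideanSpace ℝ (Fin n)) : ℝ :=
  g₀ z + ∑ i ∈ E, lam i * |g i z| + ∑ i ∈ I, lam i * max 0 (g i z)

noncomputable def Lpen {n : ℕ} {ι : Type*} (E I : Finset ι)
    (g₀ : EuclideanSpace ℝ (Fin n) → ℝ) (g : ι → EuclideanSpace ℝ (Fin n) → ℝ)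
    (lam : ι → ℝ) (z d : EuclideanSpace ℝ (Fin n)) : ℝ :=
  g₀ z + ⟪gradient g₀ z, d⟫ +
    ∑ i ∈ E, lam i * |g i z + ⟪gradient (g i) z, d⟫| +
    ∑ i ∈ I, lam i * max 0 (g i z + ⟪gradient (g i) z, d⟫)

/-! `Lpen z` is a convex function of the step `d` with `Lpen z 0 = Jpen z`. The
sufficient-decrease condition makes `Jpen (z k)` decrease; as it is bounded below on the compact
set `Z`, the predicted decreases `Jpen (z k) - Lpen (z k) (d k) ≥ 0` tend to `0`. Since every
trust radius is at least `r_l`, at a limit point `z̄` continuity gives `Jpen z̄ ≤ Lpen z̄ d` for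
`‖d‖ ≤ r_l`, so `0` is a local, hence by convexity global, minimiser of `Lpen z̄`. -/

theorem ConvexOn.finset_sum {F ι : Type*} [AddCommGroup F] [Module ℝ F] {s : Set F}
    {t : Finset ι} {f : ι → F → ℝ}
    (hs : Convex ℝ s) (hf : ∀ i ∈ t, ConvexOn ℝ s (f i)) :
    ConvexOn ℝ s fun x => ∑ i ∈ t, f i x := by
  refine ⟨hs, fun x hx y hy a b ha hb hab => ?_⟩
  simp only [smul_eq_mul, Finset.mul_sum, ← Finset.sum_add_distrib]
  exact Finset.sum_le_sum fun i hi => (hf i hi).2 hx hy ha hb hab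

theorem ConvexOn.comp_add_inner {F : Type*} [NormedAddCommGroup F] [InnerProductSpace ℝ F]
    {φ : ℝ → ℝ} (hφ : ConvexOn ℝ Set.univ φ) (c : ℝ) (v : F) :
    ConvexOn ℝ Set.univ fun d => φ (c + ⟪v, d⟫) :=
  (hφ.translate_right c).comp_linearMap (innerₛₗ ℝ v)

section Penalty

variable {n : ℕ} {ι : Type*} (E I : Finset ι) (g₀ : EuclideanSpace ℝ (Fin n) → ℝ)
  (g : ι → EuclideanSpace ℝ (Fin n) → ℝ) (lam : ι → ℝ)

theorem Lpen_zero (z : EuclideanSpace ℝ (Fin n)) :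
    Lpen E I g₀ g lam z 0 = Jpen E I g₀ g lam z := by
  simp [Lpen, Jpen]

theorem convexOn_Lpen (hlamE : ∀ i ∈ E, 0 ≤ lam i) (hlamI : ∀ i ∈ I, 0 ≤ lam i)
    (z : EuclideanSpace ℝ (Fin n)) :
    ConvexOn ℝ Set.univ (Lpen E I g₀ g lam z) := by
  have hid := (convexOn_id (𝕜 := ℝ) (β := ℝ) convex_univ)
  have habs : ConvexOn ℝ Set.univ fun x : ℝ => |x| := convexOn_norm convex_univ
  have hpos : ConvexOn ℝ Set.univ fun x : ℝ => max 0 x := (convexOn_const 0 convex_univ).sup hid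
  refine ((hid.comp_add_inner (g₀ z) (gradient g₀ z)).add ?_).add ?_
  · exact ConvexOn.finset_sum convex_univ fun i hi =>
      (habs.comp_add_inner _ _).smul (hlamE i hi)
  · exact ConvexOn.finset_sum convex_univ fun i hi =>
      (hpos.comp_add_inner _ _).smul (hlamI i hi)

theorem Jpen_le_Lpen_of_le_on_closedBall (hlamE : ∀ i ∈ E, 0 ≤ lam i)
    (hlamI : ∀ i ∈ I, 0 ≤ lam i)    {z : EuclideanSpace ℝ (Fin n)} {r : ℝ} (hr : 0 < r)
    (h : ∀ d ∈ closedBall 0 r, Jpen E I g₀ g lam z ≤ Lpen E I g₀ g lam z d)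
    (d : EuclideanSpace ℝ (Fin n)) : Jpen E I g₀ g lam z ≤ Lpen E I g₀ g lam z d := by
  have hloc : IsLocalMin (Lpen E I g₀ g lam z) 0 :=
    eventually_of_mem (closedBall_mem_nhds 0 hr) fun d hd =>
      (Lpen_zero E I g₀ g lam z).symm ▸ h d hd
  simpa only [Lpen_zero] using
    IsMinOn.of_isLocalMin_of_convex_univ hloc (convexOn_Lpen E I g₀ g lam hlamE hlamI z) d

theorem continuous_Lpen_left (hg₀ : ContDiff ℝ 1 g₀) (hgE : ∀ i ∈ E, ContDiff ℝ 1 (g i))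
    (hgI : ∀ i ∈ I, ContDiff ℝ 1 (g i)) (d : EuclideanSpace ℝ (Fin n)) :
    Continuous fun z => Lpen E I g₀ g lam z d := by
  have hlin : ∀ {f : EuclideanSpace ℝ (Fin n) → ℝ}, ContDiff ℝ 1 f →
      Continuous fun z => f z + ⟪gradient f z, d⟫ := fun hf => by
    simp only [inner_gradient_left]
    exact hf.continuous.add ((hf.continuous_fderiv one_ne_zero).clm_apply continuous_const)
  refine ((hlin hg₀).add ?_).add ?_
  · exact continuous_finsetSum _ fun i hi => continuous_const.mul (hlin (hgE i hi)).abs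
  · exact continuous_finsetSum _ fun i hi =>
      continuous_const.mul (continuous_const.max (hlin (hgI i hi)))

theorem continuous_Jpen (hg₀ : ContDiff ℝ 1 g₀) (hgE : ∀ i ∈ E, ContDiff ℝ 1 (g i))
    (hgI : ∀ i ∈ I, ContDiff ℝ 1 (g i)) : Continuous (Jpen E I g₀ g lam) := by
  simpa only [Lpen_zero] using continuous_Lpen_left E I g₀ g lam hg₀ hgE hgI 0

end Penalty

theorem tendsto_zero_of_sufficient_decrease {a δ : ℕ → ℝ} {ρ : ℝ} (hρ : 0 < ρ)
    (ha : BddBelow (Set.range a)) (hδ : ∀ k, 0 ≤ δ k)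
    (hdec : ∀ k, ρ * δ k ≤ a k - a (k + 1)) :
    Tendsto δ atTop (𝓝 0) := by
  have hanti : Antitone a := antitone_nat_of_succ_le fun k => by
    nlinarith [hδ k, hdec k]
  have hlim := tendsto_atTop_ciInf hanti ha
  have hgap : Tendsto (fun k => (a k - a (k + 1)) / ρ) atTop (𝓝 0) := by
    simpa using (hlim.sub (hlim.comp (tendsto_add_atTop_nat 1))).div_const ρ
  exact squeeze_zero hδ (fun k => (le_div_iff₀ hρ).2 (by linarith [hdec k])) hgap

theorem stmt6_general {n : ℕ} {ι : Type*} [DecidableEq ι] (E I : Finset ι)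
    (g₀ : EuclideanSpace ℝ (Fin n) → ℝ) (g : ι → EuclideanSpace ℝ (Fin n) → ℝ)
    (lam : ι → ℝ) (hlam : ∀ i ∈ E ∪ I, 0 ≤ lam i)
    (hg₀ : ContDiff ℝ 1 g₀) (hg : ∀ i ∈ E ∪ I, ContDiff ℝ 1 (g i))
    (Z : Set (EuclideanSpace ℝ (Fin n))) (hZ : IsCompact Z)
    (r_l ρ₀ : ℝ) (hrl : 0 < r_l) (hρ₀ : 0 < ρ₀)
    (z : ℕ → EuclideanSpace ℝ (Fin n)) (hzZ : ∀ k, z k ∈ Z)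
    (hstep : ∀ k : ℕ, ∃ r : ℝ, r_l ≤ r ∧
      ∃ d ∈ closedBall (0 : EuclideanSpace ℝ (Fin n)) r,
        IsMinOn (Lpen E I g₀ g lam (z k)) (closedBall 0 r) d ∧
        z (k + 1) = z k + d ∧
        Jpen E I g₀ g lam (z k) - Jpen E I g₀ g lam (z (k + 1)) ≥
          ρ₀ * (Jpen E I g₀ g lam (z k) - Lpen E I g₀ g lam (z k) d)) :
    (∃ zbar : EuclideanSpace ℝ (Fin n), ∃ φ : ℕ → ℕ, StrictMono φ ∧
        Tendsto (z ∘ φ) atTop (𝓝 zbar)) ∧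
    ∀ zbar : EuclideanSpace ℝ (Fin n),
      (∃ φ : ℕ → ℕ, StrictMono φ ∧ Tendsto (z ∘ φ) atTop (𝓝 zbar)) →
      ∀ d : EuclideanSpace ℝ (Fin n), Lpen E I g₀ g lam zbar d ≥ Jpen E I g₀ g lam zbar := by
  choose r hr d _ hmin _ hdec using hstep
  have hgE i (hi : i ∈ E) := hg i (Finset.mem_union_left I hi)
  have hgI i (hi : i ∈ I) := hg i (Finset.mem_union_right E hi)
  have hlamE i (hi : i ∈ E) := hlam i (Finset.mem_union_left I hi)
  have hlamI i (hi : i ∈ I) := hlam i (Finset.mem_union_right E hi)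
  have hJ := continuous_Jpen E I g₀ g lam hg₀ hgE hgI
  set δ : ℕ → ℝ := fun k => Jpen E I g₀ g lam (z k) - Lpen E I g₀ g lam (z k) (d k)
  have hδ0 k : 0 ≤ δ k := by
    have h0 : Lpen E I g₀ g lam (z k) (d k) ≤ Lpen E I g₀ g lam (z k) 0 :=
      hmin k (mem_closedBall_self (hrl.trans_le (hr k)).le)
    exact sub_nonneg.2 (Lpen_zero E I g₀ g lam (z k) ▸ h0)
  have hbdd : BddBelow (Set.range fun k => Jpen E I g₀ g lam (z k)) :=
    (hZ.bddBelow_image hJ.continuousOn).mono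
      (Set.range_subset_iff.2 fun k => Set.mem_image_of_mem _ (hzZ k))
  have hδ : Tendsto δ atTop (𝓝 0) :=
    tendsto_zero_of_sufficient_decrease hρ₀ hbdd hδ0 fun k => hdec k
  refine ⟨?_, fun zbar ⟨φ, hφ, hlim⟩ => ?_⟩
  · obtain ⟨zbar, -, φ, hφ, hlim⟩ := hZ.tendsto_subseq hzZ
    exact ⟨zbar, φ, hφ, hlim⟩
  refine Jpen_le_Lpen_of_le_on_closedBall E I g₀ g lam hlamE hlamI hrl fun d' hd' => ?_
  have hgap k : Jpen E I g₀ g lam (z k) - Lpen E I g₀ g lam (z k) d' ≤ δ k :=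
    sub_le_sub_left (hmin k (closedBall_subset_closedBall (hr k) hd')) _
  have hL := continuous_Lpen_left E I g₀ g lam hg₀ hgE hgI d'
  have := le_of_tendsto_of_tendsto' (((hJ.tendsto zbar).sub (hL.tendsto zbar)).comp hlim)
    (hδ.comp hφ.tendsto_atTop) fun j => hgap (φ j)
  linarith

theorem stmt6 {n : ℕ} {ι : Type*} [DecidableEq ι] (E I : Finset ι) (hEI : Disjoint E I)
    (g₀ : EuclideanSpace ℝ (Fin n) → ℝ) (g : ι → EuclideanSpace ℝ (Fin n) → ℝ)
    (lam : ι → ℝ) (hlam : ∀ i ∈ E ∪ I, 0 ≤ lam i)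
    (hg₀ : ContDiff ℝ 1 g₀) (hg : ∀ i ∈ E ∪ I, ContDiff ℝ 1 (g i))
    (Z : Set (EuclideanSpace ℝ (Fin n))) (hZne : Z.Nonempty) (hZ : IsCompact Z)
    (r_l ρ₀ : ℝ) (hrl : 0 < r_l) (hρ₀ : 0 < ρ₀) (hρ₀' : ρ₀ < 1)
    (z : ℕ → EuclideanSpace ℝ (Fin n)) (hzZ : ∀ k, z k ∈ Z)
    (hstep : ∀ k : ℕ, ∃ r : ℝ, r_l ≤ r ∧
      ∃ d ∈ closedBall (0 : EuclideanSpace ℝ (Fin n)) r,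
        IsMinOn (Lpen E I g₀ g lam (z k)) (closedBall 0 r) d ∧
        z (k + 1) = z k + d ∧
        Jpen E I g₀ g lam (z k) - Jpen E I g₀ g lam (z (k + 1)) ≥
          ρ₀ * (Jpen E I g₀ g lam (z k) - Lpen E I g₀ g lam (z k) d)) :
    (∃ zbar : EuclideanSpace ℝ (Fin n), ∃ φ : ℕ → ℕ, StrictMono φ ∧
        Tendsto (z ∘ φ) atTop (𝓝 zbar)) ∧
    ∀ zbar : EuclideanSpace ℝ (Fin n),
      (∃ φ : ℕ → ℕ, StrictMono φ ∧ Tendsto (z ∘ φ) atTop (𝓝 zbar)) →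
      ∀ d : EuclideanSpace ℝ (Fin n), Lpen E I g₀ g lam zbar d ≥ Jpen E I g₀ g lam zbar :=
  stmt6_general E I g₀ g lam hlam hg₀ hg Z hZ r_l ρ₀ hrl hρ₀ z hzZ hstep
end

section
/- (Sufficient decrease condition H1.) Assume g₀ and all g_i are differentiable with Lipschitz continuous gradients on ℝ^n. Let z̄ ∈ ℝ^n and suppose there exist a unit vector s ∈ ℝ^n, κ > 0, and ε₀ > 0 such that J(z + δ s) − J(z) < −(κ/2)δ for all z with ‖z − z̄‖ < ε₀ and all δ ∈ (0, ε₀]. Then there exist a > 0, r̄ > 0 and ε̄ > 0 such that for every z with ‖z − z̄‖ < ε̄, every r ∈ (0, r̄], and every d* minimizing L_z over the closed ball {d : ‖d‖ ≤ r}, one has J(z) − J(z + d*) ≥ a ‖d*‖². -/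
open RealInnerProductSpace Metric Filter Topology Asymptotics

/-!
Each `g` differs from its linearization by at most `K‖d‖²` (`K` a Lipschitz constant of its
gradient), and `|·|`, `max 0` are 1-Lipschitz, so `|J(z + d) - L_z(d)| ≤ C‖d‖²`. Comparing the
minimizer `d*` of `L_z` with the feasible point `δs`, `δ = ‖d*‖`:
`J(z + d*) ≤ L_z(d*) + Cδ² ≤ L_z(δs) + Cδ² ≤ J(z + δs) + 2Cδ² ≤ J(z) - κδ/2 + 2Cδ²`,
and the right side is at most `J(z) - δ²` once `δ ≤ κ / (2(2C + 1))`.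
-/

section Taylor

variable {F : Type*} [NormedAddCommGroup F] [InnerProductSpace ℝ F] [CompleteSpace F]

theorem hasDerivAt_comp_add_smul_of_differentiable {f : F → ℝ} (hf : Differentiable ℝ f)
    (z d : F) (t : ℝ) :
    HasDerivAt (fun t : ℝ => f (z + t • d)) ⟪gradient f (z + t • d), d⟫ t := by
  have hline : HasDerivAt (fun t : ℝ => z + t • d) d t := by
    simpa using ((hasDerivAt_id t).smul_const d).const_add z
  simpa [InnerProductSpace.toDual_apply_apply, Function.comp_def] using
    (hf (z + t • d)).hasGradientAt.hasFDerivAt.comp_hasDerivAt t hline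

theorem abs_sub_sub_inner_gradient_le {f : F → ℝ} (hf : Differentiable ℝ f) {K : NNReal}
    (hK : LipschitzWith K (gradient f)) (z d : F) :
    |f (z + d) - f z - ⟪gradient f z, d⟫| ≤ K * ‖d‖ ^ 2 := by
  set φ : ℝ → ℝ := fun t => f (z + t • d) - t * ⟪gradient f z, d⟫
  have hφ : ∀ t, HasDerivAt φ ⟪gradient f (z + t • d) - gradient f z, d⟫ t := fun t => by
    simpa [φ, inner_sub_left, Pi.sub_def] using
      (hasDerivAt_comp_add_smul_of_differentiable hf z d t).sub
        ((hasDerivAt_id t).mul_const ⟪gradient f z, d⟫)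
  have hφ' : ∀ t ∈ Set.Icc (0 : ℝ) 1,
      ‖⟪gradient f (z + t • d) - gradient f z, d⟫‖ ≤ K * ‖d‖ ^ 2 := fun t ht => by
    have ht' : ‖t • d‖ ≤ ‖d‖ := by
      rw [norm_smul, Real.norm_of_nonneg ht.1]
      exact mul_le_of_le_one_left (norm_nonneg d) ht.2
    calc ‖⟪gradient f (z + t • d) - gradient f z, d⟫‖
        ≤ ‖gradient f (z + t • d) - gradient f z‖ * ‖d‖ := norm_inner_le_norm _ _
      _ ≤ K * ‖t • d‖ * ‖d‖ := by
          gcongr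
          simpa [dist_eq_norm] using hK.dist_le_mul (z + t • d) z
      _ ≤ K * ‖d‖ * ‖d‖ := by gcongr
      _ = K * ‖d‖ ^ 2 := by ring
  simpa [φ, Real.norm_eq_abs, sub_sub, add_comm] using
    (convex_Icc (0 : ℝ) 1).norm_image_sub_le_of_norm_hasDerivWithin_le
      (fun t _ => (hφ t).hasDerivWithinAt) hφ' (Set.left_mem_Icc.2 zero_le_one)
      (Set.right_mem_Icc.2 zero_le_one)

end Taylor

theorem abs_sum_mul_sub_sum_mul_le {ι : Type*} {S : Finset ι} {φ : ℝ → ℝ}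
    (hφ : ∀ x y, |φ x - φ y| ≤ |x - y|) {w x y c : ι → ℝ} (hw : ∀ i ∈ S, 0 ≤ w i)
    (hxy : ∀ i ∈ S, |x i - y i| ≤ c i) :
    |∑ i ∈ S, w i * φ (x i) - ∑ i ∈ S, w i * φ (y i)| ≤ ∑ i ∈ S, w i * c i := by
  rw [← Finset.sum_sub_distrib]
  refine (Finset.abs_sum_le_sum_abs _ _).trans (Finset.sum_le_sum fun i hi => ?_)
  rw [← mul_sub, abs_mul, abs_of_nonneg (hw i hi)]
  exact mul_le_mul_of_nonneg_left ((hφ _ _).trans (hxy i hi)) (hw i hi)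

section Penalty

variable {n : ℕ} {ι : Type*} {E I : Finset ι}
  {g₀ : EuclideanSpace ℝ (Fin n) → ℝ} {g : ι → EuclideanSpace ℝ (Fin n) → ℝ} {lam : ι → ℝ}

theorem Jpen_add_sub_Lpen_eq (z d : EuclideanSpace ℝ (Fin n)) :
    Jpen E I g₀ g lam (z + d) - Lpen E I g₀ g lam z d =
      (g₀ (z + d) - g₀ z - ⟪gradient g₀ z, d⟫)
      + (∑ i ∈ E, lam i * |g i (z + d)| - ∑ i ∈ E, lam i * |g i z + ⟪gradient (g i) z, d⟫|)
      + (∑ i ∈ I, lam i * max 0 (g i (z + d))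
          - ∑ i ∈ I, lam i * max 0 (g i z + ⟪gradient (g i) z, d⟫)) := by
  simp only [Jpen, Lpen]
  ring

theorem abs_Jpen_add_sub_Lpen_le [DecidableEq ι] (hlam : ∀ i ∈ E ∪ I, 0 ≤ lam i) (hg₀ : Differentiable ℝ g₀)
    {K₀ : NNReal} (hK₀ : LipschitzWith K₀ (gradient g₀))
    (hg : ∀ i ∈ E ∪ I, Differentiable ℝ (g i)) {K : ι → NNReal}
    (hK : ∀ i ∈ E ∪ I, LipschitzWith (K i) (gradient (g i))) (z d : EuclideanSpace ℝ (Fin n)) :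
    |Jpen E I g₀ g lam (z + d) - Lpen E I g₀ g lam z d| ≤
      (K₀ + ∑ i ∈ E, lam i * K i + ∑ i ∈ I, lam i * K i) * ‖d‖ ^ 2 := by
  have htaylor : ∀ i ∈ E ∪ I,
      |g i (z + d) - (g i z + ⟪gradient (g i) z, d⟫)| ≤ K i * ‖d‖ ^ 2 := fun i hi => by
    simpa only [sub_sub] using abs_sub_sub_inner_gradient_le (hg i hi) (hK i hi) z d
  have hE := abs_sum_mul_sub_sum_mul_le (S := E) abs_abs_sub_abs_le_abs_sub
    (fun i hi => hlam i (Finset.mem_union_left I hi))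
    (fun i hi => htaylor i (Finset.mem_union_left I hi))
  have hI := abs_sum_mul_sub_sum_mul_le (S := I) (φ := max 0)
    (fun x y => by simpa only [max_comm] using abs_max_sub_max_le_abs x y 0)
    (fun i hi => hlam i (Finset.mem_union_right E hi))
    (fun i hi => htaylor i (Finset.mem_union_right E hi))
  rw [Jpen_add_sub_Lpen_eq]
  calc _ ≤ |g₀ (z + d) - g₀ z - ⟪gradient g₀ z, d⟫|
        + abs (∑ i ∈ E, lam i * |g i (z + d)| - ∑ i ∈ E, lam i * |g i z + ⟪gradient (g i) z, d⟫|)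
        + |∑ i ∈ I, lam i * max 0 (g i (z + d))
            - ∑ i ∈ I, lam i * max 0 (g i z + ⟪gradient (g i) z, d⟫)| :=
        (abs_add_le _ _).trans (add_le_add_left (abs_add_le _ _) _)
    _ ≤ K₀ * ‖d‖ ^ 2 + ∑ i ∈ E, lam i * (K i * ‖d‖ ^ 2) + ∑ i ∈ I, lam i * (K i * ‖d‖ ^ 2) :=
        add_le_add (add_le_add (abs_sub_sub_inner_gradient_le hg₀ hK₀ z d) hE) hI
    _ = _ := by simp only [add_mul, Finset.sum_mul, mul_assoc]

end Penalty

theorem sq_norm_le_sub_of_isMinOn_model {F : Type*} [NormedAddCommGroup F] [NormedSpace ℝ F]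
    {J L : F → ℝ} {z s d : F} {C κ r : ℝ} (hmodel : ∀ d, |J (z + d) - L d| ≤ C * ‖d‖ ^ 2)
    (hs : ‖s‖ = 1) (hdr : ‖d‖ ≤ r) (hmin : IsMinOn L (closedBall 0 r) d)
    (hdesc : J (z + ‖d‖ • s) - J z ≤ -(κ / 2) * ‖d‖) (hsmall : (2 * C + 1) * ‖d‖ ≤ κ / 2) :
    ‖d‖ ^ 2 ≤ J z - J (z + d) := by
  have hsd : ‖‖d‖ • s‖ = ‖d‖ := by rw [norm_smul, norm_norm, hs, mul_one]
  have hL : L d ≤ L (‖d‖ • s) := hmin (mem_closedBall_zero_iff.2 (hsd.trans_le hdr))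
  have hd := (abs_le.1 (hmodel d)).2
  have hsd' := (abs_le.1 (hmodel (‖d‖ • s))).1
  rw [hsd] at hsd'
  have hsmall' : (2 * C + 1) * ‖d‖ ^ 2 ≤ κ / 2 * ‖d‖ := by
    simpa only [sq, mul_assoc] using mul_le_mul_of_nonneg_right hsmall (norm_nonneg d)
  linarith

theorem stmt8_general {n : ℕ} {ι : Type*} [DecidableEq ι] (E I : Finset ι)
    (g₀ : EuclideanSpace ℝ (Fin n) → ℝ) (g : ι → EuclideanSpace ℝ (Fin n) → ℝ)
    (lam : ι → ℝ) (hlam : ∀ i ∈ E ∪ I, 0 ≤ lam i)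
    (hg₀ : Differentiable ℝ g₀) (hg₀' : ∃ K : NNReal, LipschitzWith K (gradient g₀))
    (hg : ∀ i ∈ E ∪ I, Differentiable ℝ (g i))
    (hg' : ∀ i ∈ E ∪ I, ∃ K : NNReal, LipschitzWith K (gradient (g i)))
    (zbar s : EuclideanSpace ℝ (Fin n)) (hs : ‖s‖ = 1)
    (κ ε₀ : ℝ) (hκ : 0 < κ) (hε₀ : 0 < ε₀)
    (hdesc : ∀ z : EuclideanSpace ℝ (Fin n), ‖z - zbar‖ < ε₀ → ∀ δ : ℝ, 0 < δ → δ ≤ ε₀ →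
      Jpen E I g₀ g lam (z + δ • s) - Jpen E I g₀ g lam z < -(κ / 2) * δ) :
    ∃ a > (0 : ℝ), ∃ rbar > (0 : ℝ), ∃ εbar > (0 : ℝ),
      ∀ z : EuclideanSpace ℝ (Fin n), ‖z - zbar‖ < εbar →
        ∀ r : ℝ, 0 < r → r ≤ rbar →
          ∀ dstar ∈ closedBall (0 : EuclideanSpace ℝ (Fin n)) r,
            IsMinOn (Lpen E I g₀ g lam z) (closedBall 0 r) dstar →
            Jpen E I g₀ g lam z - Jpen E I g₀ g lam (z + dstar) ≥ a * ‖dstar‖ ^ 2 := by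
  obtain ⟨K₀, hK₀⟩ := hg₀'
  have hK' : ∀ i, ∃ K : NNReal, i ∈ E ∪ I → LipschitzWith K (gradient (g i)) := fun i =>
    if h : i ∈ E ∪ I then (hg' i h).imp fun _ hK _ => hK else ⟨0, fun h' => (h h').elim⟩
  choose K hK using hK'
  set C : ℝ := K₀ + ∑ i ∈ E, lam i * K i + ∑ i ∈ I, lam i * K i
  have hC : 0 ≤ C := by
    have hsum : ∀ S ⊆ E ∪ I, 0 ≤ ∑ i ∈ S, lam i * K i := fun S hS =>
      Finset.sum_nonneg fun i hi => mul_nonneg (hlam i (hS hi)) (K i).coe_nonneg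
    linarith [K₀.coe_nonneg, hsum E Finset.subset_union_left, hsum I Finset.subset_union_right]
  refine ⟨1, one_pos, min ε₀ (κ / (2 * (2 * C + 1))), lt_min hε₀ (by positivity), ε₀, hε₀, ?_⟩
  intro z hz r _ hrbar d hd hmin
  have hdr : ‖d‖ ≤ r := mem_closedBall_zero_iff.1 hd
  have hdesc' : Jpen E I g₀ g lam (z + ‖d‖ • s) - Jpen E I g₀ g lam z ≤ -(κ / 2) * ‖d‖ := by
    rcases (norm_nonneg d).eq_or_lt with h | h
    · simp [← h]
    · exact (hdesc z hz _ h (hdr.trans (hrbar.trans (min_le_left _ _)))).le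
  have hsmall : (2 * C + 1) * ‖d‖ ≤ κ / 2 := by
    have := hdr.trans (hrbar.trans (min_le_right _ _))
    rw [le_div_iff₀ (by positivity)] at this
    linarith
  simpa using sq_norm_le_sub_of_isMinOn_model
    (abs_Jpen_add_sub_Lpen_le hlam hg₀ hK₀ hg hK z) hs hdr hmin hdesc' hsmall

theorem stmt8 {n : ℕ} {ι : Type*} [DecidableEq ι] (E I : Finset ι) (hEI : Disjoint E I)
    (g₀ : EuclideanSpace ℝ (Fin n) → ℝ) (g : ι → EuclideanSpace ℝ (Fin n) → ℝ)
    (lam : ι → ℝ) (hlam : ∀ i ∈ E ∪ I, 0 ≤ lam i)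
    (hg₀ : Differentiable ℝ g₀) (hg₀' : ∃ K : NNReal, LipschitzWith K (gradient g₀))
    (hg : ∀ i ∈ E ∪ I, Differentiable ℝ (g i))
    (hg' : ∀ i ∈ E ∪ I, ∃ K : NNReal, LipschitzWith K (gradient (g i)))
    (zbar s : EuclideanSpace ℝ (Fin n)) (hs : ‖s‖ = 1)
    (κ ε₀ : ℝ) (hκ : 0 < κ) (hε₀ : 0 < ε₀)
    (hdesc : ∀ z : EuclideanSpace ℝ (Fin n), ‖z - zbar‖ < ε₀ → ∀ δ : ℝ, 0 < δ → δ ≤ ε₀ →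
      Jpen E I g₀ g lam (z + δ • s) - Jpen E I g₀ g lam z < -(κ / 2) * δ) :
    ∃ a > (0 : ℝ), ∃ rbar > (0 : ℝ), ∃ εbar > (0 : ℝ),
      ∀ z : EuclideanSpace ℝ (Fin n), ‖z - zbar‖ < εbar →
        ∀ r : ℝ, 0 < r → r ≤ rbar →
          ∀ dstar ∈ closedBall (0 : EuclideanSpace ℝ (Fin n)) r,
            IsMinOn (Lpen E I g₀ g lam z) (closedBall 0 r) dstar →
            Jpen E I g₀ g lam z - Jpen E I g₀ g lam (z + dstar) ≥ a * ‖dstar‖ ^ 2 :=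
  stmt8_general E I g₀ g lam hlam hg₀ hg₀' hg hg' zbar s hs κ ε₀ hκ hε₀ hdesc
end
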